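/- For every real inner product space and every family of vectors (V_w), ‖(id−E)∘|S|‖² = ‖(id−E)∘id‖², where |S| is the reversal endomorphism and the inner product is taken over the words of length n. -/

import Mathlib

/-!
Reversal of words is an automorphism of the shuffle algebra: the shuffle recursion may equally be
run on the last letters of the two words. Admissibility and the letter counts are invariant under
reversal, so `Ē ∘ |S| = Ē`; and `E` takes values in the span of the empty word, which `|S|` fixes.
Hence `(id - E) ∘ |S| = |S| ∘ (id - E)`, and every summand of `⟨X, X⟩` is unchanged when `X` is
composed with `|S|` on the left.
-/

open Finsupp

/-- Words over the alphabet `A = {0,1,…,d}`. -/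
abbrev Word (d : ℕ) : Type := List (Fin (d+1))

/-- The free real vector space with basis the set of all words. -/
abbrev KA (d : ℕ) : Type := Word d →₀ ℝ

/-- Shuffle product of two words, as an element of `KA d`. -/
noncomputable def shuffleWord (d : ℕ) : Word d → Word d → KA d
  | [], v => Finsupp.single v 1
  | a :: u, [] => Finsupp.single (a :: u) 1
  | a :: u, b :: v =>
      Finsupp.mapDomain (List.cons a) (shuffleWord d u (b :: v)) +
      Finsupp.mapDomain (List.cons b) (shuffleWord d (a :: u) v)
  termination_by u v => u.length + v.length

/-- Bilinear extension of the shuffle product to `KA d`. -/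
noncomputable def sh (d : ℕ) (x y : KA d) : KA d :=
  x.sum fun u cu => y.sum fun v cv => (cu * cv) • shuffleWord d u v

/-- Admissible words: concatenations of blocks each of which is the single
letter `0` or a pair `aa` with `a ≠ 0`. -/
inductive Admissible (d : ℕ) : Word d → Prop
  | nil : Admissible d []
  | zero {w : Word d} : Admissible d w → Admissible d (0 :: w)
  | pair {w : Word d} (a : Fin (d+1)) : a ≠ 0 → Admissible d w →
      Admissible d (a :: a :: w)

/-- Number of `0` letters. -/
def zc (d : ℕ) (w : Word d) : ℕ := w.count 0

/-- Half the number of nonzero letters. -/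
def dc (d : ℕ) (w : Word d) : ℕ := (w.length - w.count 0) / 2

def nc (d : ℕ) (w : Word d) : ℕ := zc d w + dc d w

open Classical in
/-- The expectation map on words. -/
noncomputable def Ebar (d : ℕ) (t : ℝ) (w : Word d) : ℝ :=
  if Admissible d w then t ^ nc d w / (2 ^ dc d w * Nat.factorial (nc d w)) else 0

/-- Linear extension of the expectation map to `KA d`. -/
noncomputable def EbarL (d : ℕ) (t : ℝ) (x : KA d) : ℝ :=
  x.sum fun w c => c * Ebar d t w

/-- The linear endomorphism of `KA d` determined by values on basis words. -/
noncomputable def wordLift (d : ℕ) (f : Word d → KA d) : KA d →ₗ[ℝ] KA d :=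
  Finsupp.lsum ℝ fun w => LinearMap.toSpanSingleton ℝ (KA d) (f w)

/-- The identity endomorphism `id`. -/
noncomputable def idE (d : ℕ) : KA d →ₗ[ℝ] KA d := LinearMap.id

/-- The reversal endomorphism `|S|`. -/
noncomputable def revE (d : ℕ) : KA d →ₗ[ℝ] KA d :=
  wordLift d fun w => Finsupp.single w.reverse 1

/-- The antipode `S`. -/
noncomputable def Sa (d : ℕ) : KA d →ₗ[ℝ] KA d :=
  wordLift d fun w => Finsupp.single w.reverse ((-1 : ℝ) ^ w.length)

/-- The convolution unit `ν`. -/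
noncomputable def nuE (d : ℕ) : KA d →ₗ[ℝ] KA d :=
  wordLift d fun w => if w = [] then Finsupp.single ([] : Word d) 1 else 0

/-- The expectation endomorphism `E`. -/
noncomputable def EE (d : ℕ) (t : ℝ) : KA d →ₗ[ℝ] KA d :=
  wordLift d fun w => Finsupp.single ([] : Word d) (Ebar d t w)

/-- The convolution product `X ⋆ Y`. -/
noncomputable def conv (d : ℕ) (X Y : KA d →ₗ[ℝ] KA d) : KA d →ₗ[ℝ] KA d :=
  wordLift d fun w => ∑ k ∈ Finset.range (w.length + 1),
    sh d (X (Finsupp.single (w.take k) 1)) (Y (Finsupp.single (w.drop k) 1))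

/-- Convolution powers, `X^{⋆0} = ν`. -/
noncomputable def convPow (d : ℕ) (X : KA d →ₗ[ℝ] KA d) : ℕ → (KA d →ₗ[ℝ] KA d)
  | 0 => nuE d
  | k + 1 => conv d X (convPow d X k)

/-- The inner product `⟨X,Y⟩` of endomorphisms, taken over the words of
length `n`, relative to the family of vectors `Vf`. -/
noncomputable def ip (d : ℕ) (t : ℝ) {H : Type*} [NormedAddCommGroup H]
    [InnerProductSpace ℝ H] (Vf : Word d → H) (n : ℕ)
    (X Y : KA d →ₗ[ℝ] KA d) : ℝ :=
  ∑ u : Fin n → Fin (d+1), ∑ v : Fin n → Fin (d+1),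
    EbarL d t (sh d (X (Finsupp.single (List.ofFn u) 1))
                    (Y (Finsupp.single (List.ofFn v) 1))) *
      (inner ℝ (Vf (List.ofFn u)) (Vf (List.ofFn v)) : ℝ)

/-- Positive semidefiniteness of the expectation Gram matrix at grade `n`:
indexed by the words of length `n` together with the empty word. -/
def gramPSD (d n : ℕ) (t : ℝ) : Prop :=
  ∀ c : Option (Fin n → Fin (d+1)) → ℝ,
    0 ≤ ∑ x : Option (Fin n → Fin (d+1)), ∑ y : Option (Fin n → Fin (d+1)),
      c x * c y *
        EbarL d t (shuffleWord d (x.elim ([] : Word d) List.ofFn)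
                                 (y.elim ([] : Word d) List.ofFn))

section Shuffle

variable {d : ℕ}

lemma shuffleWord_nil_left (v : Word d) : shuffleWord d [] v = single v 1 := by
  cases v <;> rw [shuffleWord]

lemma shuffleWord_nil_right (u : Word d) : shuffleWord d u [] = single u 1 := by
  cases u <;> rw [shuffleWord]

lemma shuffleWord_cons_cons (a b : Fin (d+1)) (u v : Word d) :
    shuffleWord d (a :: u) (b :: v) =
      mapDomain (List.cons a) (shuffleWord d u (b :: v)) +
      mapDomain (List.cons b) (shuffleWord d (a :: u) v) := by
  rw [shuffleWord]

lemma mapDomain_cons_mapDomain_append_singleton (a c : Fin (d+1)) (x : KA d) :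
    mapDomain (List.cons c) (mapDomain (· ++ [a]) x) =
      mapDomain (· ++ [a]) (mapDomain (List.cons c) x) := by
  rw [← mapDomain_comp, ← mapDomain_comp]; rfl

lemma shuffleWord_append_singleton (a b : Fin (d+1)) (u v : Word d) :
    shuffleWord d (u ++ [a]) (v ++ [b]) =
      mapDomain (· ++ [a]) (shuffleWord d u (v ++ [b])) +
      mapDomain (· ++ [b]) (shuffleWord d (u ++ [a]) v) := by
  induction u generalizing v with
  | nil =>
    induction v with
    | nil =>
      simp only [List.nil_append, shuffleWord_cons_cons, shuffleWord_nil_left,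
        shuffleWord_nil_right, mapDomain_single, List.singleton_append, add_comm]
    | cons e v ihv =>
      rw [List.nil_append] at ihv ⊢
      rw [List.cons_append, shuffleWord_cons_cons, ihv, shuffleWord_cons_cons]
      simp only [shuffleWord_nil_left, mapDomain_add, mapDomain_single,
        mapDomain_cons_mapDomain_append_singleton, List.cons_append]
      abel
  | cons c u ihu =>
    induction v with
    | nil =>
      have ih_nil := ihu []
      rw [List.nil_append] at ih_nil ⊢
      rw [List.cons_append, shuffleWord_cons_cons, ih_nil, shuffleWord_cons_cons]
      simp only [shuffleWord_nil_right, mapDomain_add, mapDomain_single,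
        mapDomain_cons_mapDomain_append_singleton, List.cons_append]
      abel
    | cons e v ihv =>
      rw [List.cons_append, List.cons_append, shuffleWord_cons_cons, ← List.cons_append,
        ← List.cons_append, ihu, ihv]
      simp only [List.cons_append, shuffleWord_cons_cons, mapDomain_add,
        mapDomain_cons_mapDomain_append_singleton]
      abel

lemma mapDomain_reverse_shuffleWord (u v : Word d) :
    mapDomain List.reverse (shuffleWord d u v) = shuffleWord d u.reverse v.reverse := by
  induction u generalizing v with
  | nil => simp [shuffleWord_nil_left]
  | cons c u ihu =>
    induction v with
    | nil => simp [shuffleWord_nil_right]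
    | cons e v ihv =>
      have reverse_comp_cons (x : Fin (d+1)) :
          (List.reverse ∘ List.cons x : Word d → Word d) = (· ++ [x]) ∘ List.reverse := by
        funext w; simp
      rw [shuffleWord_cons_cons, mapDomain_add, ← mapDomain_comp, ← mapDomain_comp,
        reverse_comp_cons, reverse_comp_cons, mapDomain_comp, mapDomain_comp, ihu, ihv,
        List.reverse_cons, List.reverse_cons, shuffleWord_append_singleton]

lemma sh_mapDomain_reverse (x y : KA d) :
    sh d (mapDomain List.reverse x) (mapDomain List.reverse y) =
      mapDomain List.reverse (sh d x y) := by
  simp only [sh, sum_mapDomain_index_inj List.reverse_injective, mapDomain_sum,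
    mapDomain_smul, mapDomain_reverse_shuffleWord]

end Shuffle

section Expectation

variable {d : ℕ}

lemma Admissible.append {w w' : Word d} (h : Admissible d w)
    (h' : Admissible d w') : Admissible d (w ++ w') := by
  induction h with
  | nil => exact h'
  | zero _ ih => exact ih.zero
  | pair a ha _ ih => exact ih.pair a ha

lemma Admissible.reverse {w : Word d} (h : Admissible d w) :
    Admissible d w.reverse := by
  induction h with
  | nil => exact .nil
  | zero _ ih => simpa using ih.append (.zero .nil)
  | pair a ha _ ih => simpa using ih.append (.pair a ha .nil)

lemma admissible_reverse_iff {w : Word d} :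
    Admissible d w.reverse ↔ Admissible d w :=
  ⟨fun h => by simpa using h.reverse, Admissible.reverse⟩

lemma Ebar_reverse (t : ℝ) (w : Word d) : Ebar d t w.reverse = Ebar d t w := by
  rw [Ebar, Ebar, admissible_reverse_iff]
  simp only [nc, zc, dc, List.count_reverse, List.length_reverse]

lemma EbarL_mapDomain_reverse (t : ℝ) (x : KA d) :
    EbarL d t (mapDomain List.reverse x) = EbarL d t x := by
  simp only [EbarL, sum_mapDomain_index_inj List.reverse_injective, Ebar_reverse]

end Expectation

section Endomorphisms

variable {d : ℕ}

lemma revE_apply (x : KA d) : revE d x = mapDomain List.reverse x := by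
  induction x using Finsupp.induction_linear with
  | zero => simp
  | add x y hx hy => rw [map_add, hx, hy, mapDomain_add]
  | single w c => simp [revE, wordLift]

lemma EE_comp_revE (t : ℝ) : EE d t ∘ₗ revE d = EE d t := by
  ext w : 2
  simp [EE, revE, wordLift, Ebar_reverse]

lemma revE_comp_EE (t : ℝ) : revE d ∘ₗ EE d t = EE d t := by
  ext w : 2
  simp [EE, revE, wordLift]

lemma idE_sub_EE_comp_revE (t : ℝ) :
    (idE d - EE d t) ∘ₗ revE d = revE d ∘ₗ (idE d - EE d t) := by
  rw [LinearMap.sub_comp, LinearMap.comp_sub, EE_comp_revE, revE_comp_EE, idE,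
    LinearMap.id_comp, LinearMap.comp_id]

lemma ip_revE_comp (t : ℝ) {H : Type*} [NormedAddCommGroup H] [InnerProductSpace ℝ H]
    (Vf : Word d → H) (n : ℕ) (X Y : KA d →ₗ[ℝ] KA d) :
    ip d t Vf n (revE d ∘ₗ X) (revE d ∘ₗ Y) = ip d t Vf n X Y := by
  simp only [ip, LinearMap.comp_apply, revE_apply, sh_mapDomain_reverse,
    EbarL_mapDomain_reverse]

end Endomorphisms

theorem stmt_3_general (d n : ℕ) (t : ℝ)
    {H : Type*} [NormedAddCommGroup H] [InnerProductSpace ℝ H]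
    (Vf : Word d → H) :
    ip d t Vf n ((idE d - EE d t) ∘ₗ revE d) ((idE d - EE d t) ∘ₗ revE d)
      = ip d t Vf n ((idE d - EE d t) ∘ₗ idE d) ((idE d - EE d t) ∘ₗ idE d) := by
  rw [idE_sub_EE_comp_revE, ip_revE_comp, idE, LinearMap.comp_id]

theorem stmt_3 (d n : ℕ) (hd : 1 ≤ d) (hn : 1 ≤ n) (t : ℝ) (ht : 0 < t)
    {H : Type*} [NormedAddCommGroup H] [InnerProductSpace ℝ H]
    (Vf : Word d → H) :
    ip d t Vf n ((idE d - EE d t) ∘ₗ revE d) ((idE d - EE d t) ∘ₗ revE d)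
      = ip d t Vf n ((idE d - EE d t) ∘ₗ idE d) ((idE d - EE d t) ∘ₗ idE d) :=
  stmt_3_general d n t Vf
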